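/- Let D be a weakly ordered d-tree on {1,…,L} with labels in Σ, and let C be the unique unaryless c-tree whose head-ordered dependency projection is D. Then C is continuous if and only if D is projective and, for every head h, the weak order ≼_h satisfies the nesting property. -/

import Mathlib

/-- A node of a constituent tree: either a pre-terminal over position `i`
(standing for the pre-terminal `(p_i, i, {i})` together with its leaf child `i`),
or a proper node `node Z h cs` with label `Z`, lexical head `h` and children `cs`. -/
inductive CNode (L : ℕ) (Sg : Type) : Type where
  | pre  : Fin L → CNode L Sg
  | node : Sg → Fin L → List (CNode L Sg) → CNode L Sg

namespace CNode

variable {L : ℕ} {Sg : Type}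

/-- The lexical head of a node. -/
def head : CNode L Sg → Fin L
  | pre i => i
  | node _ h _ => h

mutual
  /-- The yield of a node. -/
  def yield : CNode L Sg → Finset (Fin L)
    | pre i => {i}
    | node _ _ cs => yieldList cs
  def yieldList : List (CNode L Sg) → Finset (Fin L)
    | [] => ∅
    | c :: cs => yield c ∪ yieldList cs
end

mutual
  /-- The list of all subtrees (nodes) of a tree, including itself. -/
  def subs : CNode L Sg → List (CNode L Sg)
    | pre i => [pre i]
    | node Z h cs => node Z h cs :: subsList cs
  def subsList : List (CNode L Sg) → List (CNode L Sg)
    | [] => []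
    | c :: cs => subs c ++ subsList cs
end

/-- Well-formedness of a c-tree: children have pairwise disjoint yields and
every proper node has exactly one child whose head is the node's head. -/
inductive Valid : CNode L Sg → Prop where
  | pre (i : Fin L) : Valid (pre i)
  | node (Z : Sg) (h : Fin L) (cs : List (CNode L Sg)) :
      (∀ c ∈ cs, Valid c) →
      cs.Pairwise (fun a b => Disjoint a.yield b.yield) →
      (∃! c, c ∈ cs ∧ head c = h) →
      Valid (node Z h cs)

/-- A c-tree on positions `1,…,L`: a well-formed tree whose leaves are exactly
the `L` positions, each appearing exactly once. -/
def IsCTree (t : CNode L Sg) : Prop := Valid t ∧ t.yield = Finset.univ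

/-- Every proper node has exactly two children. -/
def Binary (t : CNode L Sg) : Prop :=
  ∀ s ∈ t.subs, ∀ Z h cs, s = node Z h cs → cs.length = 2

/-- No proper node has exactly one child. -/
def Unaryless (t : CNode L Sg) : Prop :=
  ∀ s ∈ t.subs, ∀ Z h cs, s = node Z h cs → cs.length ≠ 1

/-- Every node's yield is an interval of consecutive positions. -/
def Continuous (t : CNode L Sg) : Prop :=
  ∀ s ∈ t.subs, ∃ a b : Fin L, s.yield = Finset.Icc a b

/-- `AttachesAt C h m Z n`: `n` is a proper node of `C` with label `Z` and lexical
head `h`, having a (non-head) child whose lexical head is `m ≠ h`;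
i.e. the modifier `m` attaches to `h` at the spine node `n`, generating an arc
`(h, m)` labeled `Z`. -/
def AttachesAt (C : CNode L Sg) (h m : Fin L) (Z : Sg) (n : CNode L Sg) : Prop :=
  n ∈ C.subs ∧ ∃ cs, n = node Z h cs ∧ m ≠ h ∧ ∃ c ∈ cs, head c = m

/-- A proper node with head `h` having at least one non-head child
(i.e. a node of `h`'s spine at which some modifier attaches). -/
def attachB (h : Fin L) : CNode L Sg → Bool
  | pre _ => false
  | node _ h' cs => h' = h && cs.any (fun c => head c != h)

/-- The position, counted from the bottom of the spine of `h`, of the spine node `n`: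
the number of proper nodes with head `h` lying weakly below `n` at which modifiers
attach.  This is the order index (`#1, #2, …`) of the attachment event at `n`. -/
def spineIdx (h : Fin L) (n : CNode L Sg) : ℕ :=
  n.subs.countP (attachB h)

end CNode

/-- An ordered, labeled dependency tree on positions `{1,…,L}` with labels in `Sg`:
`par m = some (h, ℓ, j)` means there is an arc from head `h` to modifier `m`,
carrying label `ℓ` and order index `j` (the position of the attachment event of `m`
in the order of `h`'s modifiers). -/
structure ODTree (L : ℕ) (Sg : Type) : Type where
  root : Fin L
  par : Fin L → Option (Fin L × Sg × ℕ)
  root_par : par root = none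
  reach : ∀ v : Fin L, Relation.ReflTransGen (fun a b => (par b).map (·.1) = some a) root v

namespace ODTree

variable {L : ℕ} {Sg : Type}

/-- The arc relation: `h` is the head of `m`. -/
def arc (D : ODTree L Sg) (h m : Fin L) : Prop := (D.par m).map (·.1) = some h

/-- `D` is a weakly ordered d-tree: for each head, the order indices of its modifiers
are exactly `1, …, J` for some `J` (so they canonically encode a total preorder, i.e.
weak order, on the modifiers), and equivalent modifiers (same index) carry the same
label. -/
def WeaklyOrdered (D : ODTree L Sg) : Prop :=
  (∀ m h ℓ j, D.par m = some (h, ℓ, j) →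
     1 ≤ j ∧ ∀ k, 1 ≤ k → k < j → ∃ m' ℓ', D.par m' = some (h, ℓ', k)) ∧
  (∀ m m' h ℓ ℓ' j, D.par m = some (h, ℓ, j) → D.par m' = some (h, ℓ', j) → ℓ = ℓ')

/-- `D` is a strictly ordered d-tree: additionally, no two modifiers of the same head
share an index, so the indices encode a strict total order on the modifiers. -/
def StrictlyOrdered (D : ODTree L Sg) : Prop :=
  WeaklyOrdered D ∧
  ∀ m m' h ℓ ℓ' j, D.par m = some (h, ℓ, j) → D.par m' = some (h, ℓ', j) → m = m'

/-- Projectivity: for every arc `(h,m)`, every position strictly between `h` and `m`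
is reachable from `h` by a directed path. -/
def Projective (D : ODTree L Sg) : Prop :=
  ∀ h m, D.arc h m → ∀ d : Fin L, min h m < d → d < max h m →
    Relation.ReflTransGen D.arc h d

/-- The nesting property (for weak orders): closer modifiers on the same side of the
head are attached first, i.e. `h < m < m'` or `h > m > m'` implies `m ≺_h m'` or
`m ≡_h m'`, i.e. the index of `m` is at most that of `m'`. -/
def Nested (D : ODTree L Sg) : Prop :=
  ∀ (h m m' : Fin L) (ℓ ℓ' : Sg) (j j' : ℕ),
    D.par m = some (h, ℓ, j) → D.par m' = some (h, ℓ', j') →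
    ((h < m ∧ m < m') ∨ (m' < m ∧ m < h)) → j ≤ j'

/-- The nesting property for strict orders: `h < m < m'` or `h > m > m'` implies
`m ≺_h m'`, i.e. the index of `m` is strictly smaller than that of `m'`. -/
def NestedStrict (D : ODTree L Sg) : Prop :=
  ∀ (h m m' : Fin L) (ℓ ℓ' : Sg) (j j' : ℕ),
    D.par m = some (h, ℓ, j) → D.par m' = some (h, ℓ', j') →
    ((h < m ∧ m < m') ∨ (m' < m ∧ m < h)) → j < j'

end ODTree

/-- `D` is the head-ordered dependency projection of the c-tree `C`:
`D` has an arc `(h, m)` with label `Z` and order index `j` exactly when some proper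
node `n` of `C` with label `Z` and head `h` has a non-head child headed `m`, and `j`
is the position of `n` among the attachment nodes of `h`'s spine, counted from the
bottom (so modifiers attaching at lower spine nodes get smaller indices, and
modifiers attaching at the same spine node get the same index). -/
def IsProjection {L : ℕ} {Sg : Type} (C : CNode L Sg) (D : ODTree L Sg) : Prop :=
  ∀ (h m : Fin L) (ℓ : Sg) (j : ℕ),
    D.par m = some (h, ℓ, j) ↔ ∃ n, CNode.AttachesAt C h m ℓ n ∧ j = CNode.spineIdx h n

/-! The yield of every node `s` of `C` lies among the `D`-descendants of its head, and the
descendants of a modifier `m` stay inside the child at which `m` attaches. Hence the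
descendants of a modifier of `s.head` lie either inside `s` (if `m` attaches weakly below `s`
on the spine, so with a smaller index) or outside `s` (with a larger index). Projectivity makes
every descendant set an interval.

If all yields are intervals, projectivity and nesting are read off the yield of the attachment
node. Conversely, a gap `d` in the yield of `s` is reached from `s.head` through a modifier `m₁`
attached above `s`, while the endpoint of the yield beyond `d` is reached through a modifier
`m₀` attached weakly below `s`; then `m₁` lies between `s.head` and `m₀` but has the larger
index, against nesting. -/

theorem Finset.exists_eq_Icc_of_ordConnected {α : Type*} [LinearOrder α] [LocallyFiniteOrder α]
    {s : Finset α} (hs : s.Nonempty) (hconn : (s : Set α).OrdConnected) :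
    ∃ a b, s = Finset.Icc a b := by
  refine ⟨s.min' hs, s.max' hs, Finset.ext fun d => ⟨fun hd => ?_, fun hd => ?_⟩⟩
  · exact Finset.mem_Icc.2 ⟨s.min'_le d hd, s.le_max' d hd⟩
  · exact hconn.out (s.min'_mem hs) (s.max'_mem hs) (Finset.mem_Icc.1 hd)

theorem mem_uIcc_or_mem_uIcc_of_mem_Icc {α : Type*} [LinearOrder α] {x y d : α} (h : α)
    (hd : d ∈ Set.Icc x y) : d ∈ Set.uIcc h x ∨ d ∈ Set.uIcc h y := by
  rcases le_total d h with hdh | hhd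
  · exact Or.inl (Set.mem_uIcc.2 (Or.inr ⟨hd.1, hdh⟩))
  · exact Or.inr (Set.mem_uIcc.2 (Or.inl ⟨hhd, hd.2⟩))

theorem lt_lt_or_lt_lt_of_notMem_uIcc {α : Type*} [LinearOrder α] {h d z m₀ m₁ : α}
    (hd : d ∈ Set.uIcc h z) (hh : h ∉ Set.uIcc m₁ d) (hd₀ : d ∉ Set.uIcc m₀ z)
    (hm₀ : m₀ ∉ Set.uIcc m₁ d) : (h < m₁ ∧ m₁ < m₀) ∨ (m₀ < m₁ ∧ m₁ < h) := by
  simp only [Set.mem_uIcc] at hd hh hd₀ hm₀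
  grind

namespace CNode

variable {L : ℕ} {Sg : Type}

theorem mem_yieldList {cs : List (CNode L Sg)} {x : Fin L} :
    x ∈ yieldList cs ↔ ∃ c ∈ cs, x ∈ c.yield := by
  induction cs with
  | nil => simp [yieldList]
  | cons c cs ih => simp [yieldList, ih]

theorem mem_subsList {cs : List (CNode L Sg)} {s : CNode L Sg} :
    s ∈ subsList cs ↔ ∃ c ∈ cs, s ∈ c.subs := by
  induction cs with
  | nil => simp [subsList]
  | cons c cs ih => simp [subsList, ih]

theorem mem_subs_node {Z : Sg} {h : Fin L} {cs : List (CNode L Sg)} {s : CNode L Sg} :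
    s ∈ (node Z h cs).subs ↔ s = node Z h cs ∨ ∃ c ∈ cs, s ∈ c.subs := by
  rw [subs, List.mem_cons, mem_subsList]

theorem mem_subs_self (t : CNode L Sg) : t ∈ t.subs := by
  cases t <;> simp [subs]

theorem child_mem_subs {Z : Sg} {h : Fin L} {cs : List (CNode L Sg)} {c : CNode L Sg}
    (hc : c ∈ cs) : c ∈ (node Z h cs).subs :=
  mem_subs_node.2 (Or.inr ⟨c, hc, mem_subs_self c⟩)

theorem yield_subset_of_mem {Z : Sg} {h : Fin L} {cs : List (CNode L Sg)} {c : CNode L Sg}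
    (hc : c ∈ cs) : c.yield ⊆ (node Z h cs).yield :=
  fun _ hx => mem_yieldList.2 ⟨c, hc, hx⟩

theorem subs_sublist_subsList {c : CNode L Sg} {cs : List (CNode L Sg)} (hc : c ∈ cs) :
    c.subs.Sublist (subsList cs) := by
  induction cs with
  | nil => cases hc
  | cons a cs ih =>
    rw [subsList]
    obtain rfl | hc := List.mem_cons.1 hc
    · exact List.sublist_append_left _ _
    · exact (ih hc).trans (List.sublist_append_right _ _)

theorem subs_sublist_of_mem_subs : ∀ {t s : CNode L Sg}, s ∈ t.subs → s.subs.Sublist t.subs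
  | pre _, s, hs => by
    rw [List.mem_singleton.1 hs]
  | node Z h cs, s, hs => by
    obtain rfl | ⟨c, hc, hsc⟩ := mem_subs_node.1 hs
    · exact .refl _
    · exact ((subs_sublist_of_mem_subs hsc).trans (subs_sublist_subsList hc)).cons _
termination_by t => sizeOf t
decreasing_by
  have := List.sizeOf_lt_of_mem hc
  simp_wf
  omega

theorem mem_subs_trans {s u t : CNode L Sg} (hsu : s ∈ u.subs) (hut : u ∈ t.subs) :
    s ∈ t.subs :=
  (subs_sublist_of_mem_subs hut).subset hsu

theorem yield_subset_of_mem_subs : ∀ {t s : CNode L Sg}, s ∈ t.subs → s.yield ⊆ t.yield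
  | pre _, s, hs => by
    rw [List.mem_singleton.1 hs]
  | node Z h cs, s, hs => by
    obtain rfl | ⟨c, hc, hsc⟩ := mem_subs_node.1 hs
    · exact subset_rfl
    · exact (yield_subset_of_mem_subs hsc).trans (yield_subset_of_mem hc)
termination_by t => sizeOf t
decreasing_by
  have := List.sizeOf_lt_of_mem hc
  simp_wf
  omega

theorem spineIdx_mono (h : Fin L) {s t : CNode L Sg} (hs : s ∈ t.subs) :
    spineIdx h s ≤ spineIdx h t :=
  (subs_sublist_of_mem_subs hs).countP_le

theorem spineIdx_lt {Z : Sg} {h : Fin L} {cs : List (CNode L Sg)} {s c : CNode L Sg}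
    (hs : s ∈ subsList cs) (hc : c ∈ cs) (hch : c.head ≠ h) :
    spineIdx h s < spineIdx h (node Z h cs) := by
  obtain ⟨c', hc', hsc'⟩ := mem_subsList.1 hs
  have hattach : attachB h (node Z h cs) = true := by
    simpa [attachB] using ⟨c, hc, hch⟩
  calc spineIdx h s ≤ (subsList cs).countP (attachB h) :=
        ((subs_sublist_of_mem_subs hsc').trans (subs_sublist_subsList hc')).countP_le
    _ < spineIdx h (node Z h cs) := by simp [spineIdx, subs, hattach]

theorem Valid.of_mem_subs {t s : CNode L Sg} (ht : Valid t) (hs : s ∈ t.subs) : Valid s := by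
  induction ht with
  | pre i => rw [List.mem_singleton.1 hs]; exact .pre i
  | node Z h cs hcs hdisj hunique ih =>
    obtain rfl | ⟨c, hc, hsc⟩ := mem_subs_node.1 hs
    · exact .node Z h cs hcs hdisj hunique
    · exact ih c hc hsc

theorem Valid.head_mem_yield {t : CNode L Sg} (ht : Valid t) : t.head ∈ t.yield := by
  induction ht with
  | pre i => simp [head, yield]
  | node Z h cs _ _ hunique ih =>
    obtain ⟨c, ⟨hc, rfl⟩, -⟩ := hunique
    exact yield_subset_of_mem hc (ih c hc)

theorem Valid.disjoint_yield {Z : Sg} {h : Fin L} {cs : List (CNode L Sg)} {c c' : CNode L Sg}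
    (hn : Valid (.node Z h cs)) (hc : c ∈ cs) (hc' : c' ∈ cs) (hne : c ≠ c') :
    Disjoint c.yield c'.yield := by
  obtain _ | ⟨_, _, _, _, hdisj, _⟩ := hn
  have : Std.Symm fun a b : CNode L Sg => Disjoint a.yield b.yield := ⟨fun _ _ h => h.symm⟩
  exact hdisj.forall hc hc' hne

theorem Valid.head_mem_yield_of_mem {t s : CNode L Sg} (ht : Valid t) (hs : s ∈ t.subs) :
    s.head ∈ s.yield :=
  (ht.of_mem_subs hs).head_mem_yield

theorem Valid.eq_of_mem_yield {Z : Sg} {h : Fin L} {cs : List (CNode L Sg)} {c c' : CNode L Sg}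
    {x : Fin L} (hn : Valid (.node Z h cs)) (hc : c ∈ cs) (hc' : c' ∈ cs)
    (hx : x ∈ c.yield) (hx' : x ∈ c'.yield) : c = c' := by
  by_contra hne
  exact Finset.disjoint_left.1 (hn.disjoint_yield hc hc' hne) hx hx'

theorem Valid.head_notMem_yield {Z : Sg} {h : Fin L} {cs : List (CNode L Sg)} {c : CNode L Sg}
    (hn : Valid (.node Z h cs)) (hc : c ∈ cs) (hch : c.head ≠ h) : h ∉ c.yield := by
  obtain _ | ⟨_, _, _, hcs, _, ⟨c₀, ⟨hc₀, hc₀h⟩, -⟩⟩ := id hn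
  intro hh
  obtain rfl := hn.eq_of_mem_yield hc hc₀ hh (hc₀h ▸ (hcs c₀ hc₀).head_mem_yield)
  exact hch hc₀h

theorem Valid.mem_subs_or_mem_subs {t s s' : CNode L Sg} (ht : Valid t) (hs : s ∈ t.subs)
    (hs' : s' ∈ t.subs) {x : Fin L} (hx : x ∈ s.yield) (hx' : x ∈ s'.yield) :
    s ∈ s'.subs ∨ s' ∈ s.subs := by
  induction ht generalizing s s' with
  | pre i =>
    rw [List.mem_singleton.1 hs, List.mem_singleton.1 hs']
    exact .inl (mem_subs_self _)
  | node Z h cs hcs hdisj hunique ih =>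
    obtain rfl | ⟨c, hc, hsc⟩ := mem_subs_node.1 hs
    · exact .inr hs'
    obtain rfl | ⟨c', hc', hsc'⟩ := mem_subs_node.1 hs'
    · exact .inl hs
    obtain rfl : c = c' := (Valid.node Z h cs hcs hdisj hunique).eq_of_mem_yield hc hc'
      (yield_subset_of_mem_subs hsc hx) (yield_subset_of_mem_subs hsc' hx')
    exact ih c hc hsc hsc' hx hx'

theorem Valid.head_eq_of_head_mem_yield {t s : CNode L Sg} (ht : Valid t) (hs : s ∈ t.subs)
    (hhead : t.head ∈ s.yield) : s.head = t.head := by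
  induction ht with
  | pre i => rw [List.mem_singleton.1 hs]
  | node Z h cs hcs hdisj hunique ih =>
    obtain rfl | ⟨c, hc, hsc⟩ := mem_subs_node.1 hs
    · rfl
    have hn := Valid.node Z h cs hcs hdisj hunique
    obtain ⟨c₀, ⟨hc₀, hc₀h⟩, -⟩ := hunique
    obtain rfl : c = c₀ := hn.eq_of_mem_yield hc hc₀ (yield_subset_of_mem_subs hsc hhead)
      (hc₀h ▸ (hcs c₀ hc₀).head_mem_yield)
    exact (ih c hc hsc (hc₀h ▸ hhead)).trans hc₀h

theorem Valid.disjoint_yield_of_mem_subsList {Z : Sg} {h : Fin L} {cs : List (CNode L Sg)}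
    {s c : CNode L Sg} (hn : Valid (.node Z h cs)) (hs : s ∈ subsList cs) (hh : h ∈ s.yield)
    (hc : c ∈ cs) (hch : c.head ≠ h) : Disjoint s.yield c.yield := by
  obtain ⟨c', hc', hsc'⟩ := mem_subsList.1 hs
  have hhc' := yield_subset_of_mem_subs hsc' hh
  obtain rfl | hne := eq_or_ne c' c
  · exact absurd hhc' (hn.head_notMem_yield hc hch)
  · exact (hn.disjoint_yield hc' hc hne).mono_left (yield_subset_of_mem_subs hsc')

theorem Valid.mem_subs_of_head_mem_yield {t u c : CNode L Sg} {Z : Sg} {h : Fin L}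
    {cs : List (CNode L Sg)} (ht : Valid t) (hn : CNode.node Z h cs ∈ t.subs) (hc : c ∈ cs)
    (hch : c.head ≠ h) (hu : u ∈ t.subs) (huc : u.head ∈ c.yield) : u ∈ c.subs := by
  have hct := mem_subs_trans (child_mem_subs hc) hn
  have hvu := ht.of_mem_subs hu
  have hcc := ht.head_mem_yield_of_mem hct
  rcases ht.mem_subs_or_mem_subs hu hct hvu.head_mem_yield huc with huc' | hcu
  · exact huc'
  have hcu_head : c.head = u.head := hvu.head_eq_of_head_mem_yield hcu huc
  rcases ht.mem_subs_or_mem_subs hu hn (yield_subset_of_mem_subs hcu hcc)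
    (yield_subset_of_mem hc hcc) with hun | hnu
  · obtain rfl | ⟨c', hc', huc'⟩ := mem_subs_node.1 hun
    · exact absurd hcu_head hch
    · obtain rfl := (ht.of_mem_subs hn).eq_of_mem_yield hc' hc
        (yield_subset_of_mem_subs (mem_subs_trans hcu huc') hcc) hcc
      exact huc'
  · have hnu_head := hvu.head_eq_of_head_mem_yield hnu (yield_subset_of_mem hc huc)
    exact absurd (hcu_head.trans hnu_head.symm) hch

theorem continuous_iff_ordConnected {C : CNode L Sg} (hC : Valid C) :
    C.Continuous ↔ ∀ s ∈ C.subs, (s.yield : Set (Fin L)).OrdConnected := by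
  refine forall₂_congr fun s hs => ⟨?_, Finset.exists_eq_Icc_of_ordConnected
    ⟨_, hC.head_mem_yield_of_mem hs⟩⟩
  rintro ⟨a, b, hab⟩
  rw [hab, Finset.coe_Icc]
  exact Set.ordConnected_Icc

end CNode

namespace ODTree

variable {L : ℕ} {Sg : Type} {D : ODTree L Sg}

def descendants (D : ODTree L Sg) (h : Fin L) : Set (Fin L) :=
  {x | Relation.ReflTransGen D.arc h x}

theorem mem_descendants_self (D : ODTree L Sg) (h : Fin L) : h ∈ D.descendants h :=
  Relation.ReflTransGen.refl

theorem arc_iff {h m : Fin L} : D.arc h m ↔ ∃ ℓ j, D.par m = some (h, ℓ, j) := by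
  simp [arc]

theorem Projective.uIcc_subset_descendants (hP : D.Projective) {h m : Fin L} (hm : D.arc h m) :
    Set.uIcc h m ⊆ D.descendants h := by
  intro d hd
  rcases eq_or_ne d h with rfl | hdh
  · exact D.mem_descendants_self d
  rcases eq_or_ne d m with rfl | hdm
  · exact .single hm
  rw [Set.mem_uIcc] at hd
  exact hP h m hm d (by grind [min_lt_iff]) (by grind [lt_max_iff])

theorem Projective.ordConnected_descendants (hP : D.Projective) (h : Fin L) :
    (D.descendants h).OrdConnected := by
  refine Set.ordConnected_of_uIcc_subset_left (x := h) fun m hm => ?_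
  induction hm with
  | refl => simpa using D.mem_descendants_self h
  | tail hb hbc ih =>
    refine Set.uIcc_subset_uIcc_union_uIcc.trans (Set.union_subset ih fun d hd => ?_)
    exact hb.trans (hP.uIcc_subset_descendants hbc hd)

end ODTree

namespace IsProjection

open CNode ODTree

variable {L : ℕ} {Sg : Type} {C : CNode L Sg} {D : ODTree L Sg}

theorem par_eq (hproj : IsProjection C D) {Z : Sg} {h : Fin L} {cs : List (CNode L Sg)}
    {c : CNode L Sg} (hn : node Z h cs ∈ C.subs) (hc : c ∈ cs) (hch : c.head ≠ h) :
    D.par c.head = some (h, Z, spineIdx h (node Z h cs)) :=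
  (hproj _ _ _ _).2 ⟨_, ⟨hn, cs, rfl, hch, c, hc, rfl⟩, rfl⟩

theorem yield_subset_descendants (hproj : IsProjection C D) (hC : Valid C) {s : CNode L Sg}
    (hs : s ∈ C.subs) : ↑s.yield ⊆ D.descendants s.head := by
  induction hC.of_mem_subs hs with
  | pre i => simpa [yield, head] using D.mem_descendants_self i
  | node Z h cs _ _ _ ih =>
    intro x hx
    obtain ⟨c, hc, hxc⟩ := mem_yieldList.1 hx
    have hcx := ih c hc (mem_subs_trans (child_mem_subs hc) hs) hxc
    by_cases hch : c.head = h
    · rwa [hch] at hcx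
    · exact .head (arc_iff.2 ⟨_, _, hproj.par_eq hs hc hch⟩) hcx

theorem descendants_subset_yield (hproj : IsProjection C D) (hC : Valid C) {Z : Sg} {h : Fin L}
    {cs : List (CNode L Sg)} {c : CNode L Sg} (hn : node Z h cs ∈ C.subs) (hc : c ∈ cs)
    (hch : c.head ≠ h) : D.descendants c.head ⊆ ↑c.yield := by
  intro u hu
  induction hu with
  | refl => exact hC.head_mem_yield_of_mem (mem_subs_trans (child_mem_subs hc) hn)
  | tail _ hwu ih =>
    obtain ⟨ℓ, j, hpar⟩ := arc_iff.1 hwu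
    obtain ⟨_, ⟨hn', cs', rfl, -, c', hc', rfl⟩, -⟩ := (hproj _ _ _ _).1 hpar
    exact yield_subset_of_mem_subs (hC.mem_subs_of_head_mem_yield hn hc hch hn' ih)
      (yield_subset_of_mem hc' (hC.head_mem_yield_of_mem (mem_subs_trans (child_mem_subs hc') hn')))

theorem descendants_subset_or_disjoint (hproj : IsProjection C D) (hC : Valid C)
    {s : CNode L Sg} {m : Fin L} {ℓ : Sg} {j : ℕ} (hs : s ∈ C.subs)
    (hpar : D.par m = some (s.head, ℓ, j)) :
    (D.descendants m ⊆ ↑s.yield ∧ j ≤ spineIdx s.head s) ∨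
      (Disjoint (D.descendants m) ↑s.yield ∧ spineIdx s.head s < j) := by
  obtain ⟨_, ⟨hn, cs, rfl, hmh, c, hc, rfl⟩, rfl⟩ := (hproj _ _ _ _).1 hpar
  have hdesc := hproj.descendants_subset_yield hC hn hc hmh
  by_cases hns : node ℓ s.head cs ∈ s.subs
  · refine .inl ⟨hdesc.trans ?_, spineIdx_mono _ hns⟩
    exact Finset.coe_subset.2 ((yield_subset_of_mem hc).trans (yield_subset_of_mem_subs hns))
  have hsn := (hC.mem_subs_or_mem_subs hs hn (hC.head_mem_yield_of_mem hs)
    (hC.head_mem_yield_of_mem hn)).resolve_right hns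
  have hs' : s ∈ subsList cs := (List.mem_cons.1 hsn).resolve_left fun h => hns (h ▸ hsn)
  have hdisj := (hC.of_mem_subs hn).disjoint_yield_of_mem_subsList hs'
    (hC.head_mem_yield_of_mem hs) hc hmh
  exact .inr ⟨(Finset.disjoint_coe.2 hdisj.symm).mono_left hdesc, spineIdx_lt hs' hc hmh⟩

theorem projective (hproj : IsProjection C D) (hC : Valid C)
    (hconn : ∀ s ∈ C.subs, (s.yield : Set (Fin L)).OrdConnected) : D.Projective := by
  intro h m hm d hmin hmax
  obtain ⟨ℓ, j, hpar⟩ := arc_iff.1 hm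
  obtain ⟨_, ⟨hn, cs, rfl, -, c, hc, rfl⟩, -⟩ := (hproj _ _ _ _).1 hpar
  have hm : c.head ∈ (node ℓ h cs).yield :=
    yield_subset_of_mem hc (hC.head_mem_yield_of_mem (mem_subs_trans (child_mem_subs hc) hn))
  exact hproj.yield_subset_descendants hC hn
    ((hconn _ hn).uIcc_subset (hC.head_mem_yield_of_mem hn) hm ⟨hmin.le, hmax.le⟩)

theorem nested (hproj : IsProjection C D) (hC : Valid C)
    (hconn : ∀ s ∈ C.subs, (s.yield : Set (Fin L)).OrdConnected) : D.Nested := by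
  intro h m m' ℓ ℓ' j j' hpar hpar' hbetween
  obtain ⟨_, ⟨hn', cs', rfl, -, c', hc', rfl⟩, rfl⟩ := (hproj _ _ _ _).1 hpar'
  refine ((hproj.descendants_subset_or_disjoint hC hn' hpar).resolve_right
    fun ⟨hdisj, _⟩ => Set.disjoint_left.1 hdisj (D.mem_descendants_self m) ?_).2
  have hm' : c'.head ∈ (node ℓ' h cs').yield :=
    yield_subset_of_mem hc' (hC.head_mem_yield_of_mem (mem_subs_trans (child_mem_subs hc') hn'))
  exact (hconn _ hn').uIcc_subset (hC.head_mem_yield_of_mem hn') hm' <| Set.mem_uIcc.2 <|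
    hbetween.imp (fun ⟨h₁, h₂⟩ => ⟨h₁.le, h₂.le⟩) fun ⟨h₁, h₂⟩ => ⟨h₁.le, h₂.le⟩

theorem ordConnected_yield (hproj : IsProjection C D) (hC : Valid C) (hP : D.Projective)
    (hN : D.Nested) {s : CNode L Sg} (hs : s ∈ C.subs) :
    (s.yield : Set (Fin L)).OrdConnected := by
  refine ⟨fun x hx y hy d hd => ?_⟩
  by_contra hds
  have hh : s.head ∈ s.yield := hC.head_mem_yield_of_mem hs
  have hdesc := hproj.yield_subset_descendants hC hs
  obtain ⟨m₁, hm₁, hm₁d⟩ := (Relation.ReflTransGen.cases_head ((hP.ordConnected_descendants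
    s.head).out (hdesc hx) (hdesc hy) hd)).resolve_left fun hd => hds (hd ▸ hh)
  obtain ⟨ℓ₁, i₁, hpar₁⟩ := arc_iff.1 hm₁
  obtain ⟨hdisj₁, hi₁⟩ := (hproj.descendants_subset_or_disjoint hC hs hpar₁).resolve_left
    fun ⟨hsub, _⟩ => hds (hsub hm₁d)
  obtain ⟨z, hz, hdz⟩ : ∃ z ∈ s.yield, d ∈ Set.uIcc s.head z :=
    (mem_uIcc_or_mem_uIcc_of_mem_Icc s.head hd).elim (⟨x, hx, ·⟩) (⟨y, hy, ·⟩)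
  have hzh : s.head ≠ z := by
    rintro rfl
    rw [Set.uIcc_self, Set.mem_singleton_iff] at hdz
    exact hds (hdz ▸ hh)
  obtain ⟨m₀, hm₀, hm₀z⟩ := (Relation.ReflTransGen.cases_head (hdesc hz)).resolve_left hzh
  obtain ⟨ℓ₀, i₀, hpar₀⟩ := arc_iff.1 hm₀
  obtain ⟨hsub₀, hi₀⟩ := (hproj.descendants_subset_or_disjoint hC hs hpar₀).resolve_right
    fun ⟨hdisj, _⟩ => Set.disjoint_left.1 hdisj hm₀z hz
  have hconn₁ := (hP.ordConnected_descendants m₁).uIcc_subset (D.mem_descendants_self m₁) hm₁d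
  have hconn₀ := (hP.ordConnected_descendants m₀).uIcc_subset (D.mem_descendants_self m₀) hm₀z
  have := hN s.head m₁ m₀ ℓ₁ ℓ₀ i₁ i₀ hpar₁ hpar₀ <| lt_lt_or_lt_lt_of_notMem_uIcc hdz
    (fun h => Set.disjoint_left.1 hdisj₁ (hconn₁ h) hh) (fun h => hds (hsub₀ (hconn₀ h)))
    (fun h => Set.disjoint_left.1 hdisj₁ (hconn₁ h) (hsub₀ (D.mem_descendants_self m₀)))
  omega

end IsProjection

/-- Let `D` be a weakly ordered d-tree on `{1,…,L}` with labels in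
`Sg`, and let `C` be the (unique, by Proposition 2) unaryless c-tree whose
head-ordered dependency projection is `D`.  Then `C` is continuous if and only if
`D` is projective and, for every head `h`, the weak order on `M_h` satisfies the
nesting property. -/
theorem stmt12 (L : ℕ) (Sg P : Type) [Fintype Sg] (pos : Fin L → P)
    (D : ODTree L Sg) (hD : D.WeaklyOrdered)
    (C : CNode L Sg) (hC : CNode.IsCTree C) (hU : CNode.Unaryless C)
    (hproj : IsProjection C D) :
    CNode.Continuous C ↔ (D.Projective ∧ D.Nested) := by
  rw [CNode.continuous_iff_ordConnected hC.1]
  exact ⟨fun hconn => ⟨hproj.projective hC.1 hconn, hproj.nested hC.1 hconn⟩,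
    fun ⟨hP, hN⟩ _ hs => hproj.ordConnected_yield hC.1 hP hN hs⟩
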